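/- Let 0 < κ < α ≤ 1 and C ≥ 1. Let μ be a compactly supported Borel probability measure on ℝ² and ν a Borel probability measure on S¹ satisfying ν(B(θ, r)) ≤ C r^α for all θ and r > 0. Then ∫_{S¹} I_κ(π_θ μ) dν(θ) ≤ C' · C · I_κ(μ), where C' depends only on κ and α, π_θ(x) = ⟨x, θ⟩, and π_θ μ denotes the push-forward of μ under π_θ. -/

import Mathlib

/-!
By Tonelli, `∫ I_κ(π_θ μ) dν(θ) = ∬ ∫ |⟪x - y, θ⟫|^{-κ} dν(θ) dμ(x) dμ(y)`, so it suffices to show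
`∫ |⟪w, θ⟫|^{-κ} dν(θ) ≲ C |w|^{-κ}` for every `w`. The unit vectors `θ` with `|⟪w, θ⟫| ≤ s` lie
within `√2 s / |w|` of `±w^⊥ / |w|`, so the Frostman condition gives them `ν`-measure
`≲ C (s / |w|)^α`. Splitting the circle into the dyadic shells `|⟪w, θ⟫| ≈ 2^{-n} |w|` turns the
integral into a geometric series with ratio `2^{κ-α} < 1`.
-/

open MeasureTheory
open scoped ENNReal

/-- The Riesz `t`-energy `I_t(μ) = ∬ |x − y|^{−t} dμ(x) dμ(y)`. -/
noncomputable def rieszEnergy {X : Type*} [PseudoEMetricSpace X] [MeasurableSpace X]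
    (t : ℝ) (μ : Measure X) : ℝ≥0∞ :=
  ∫⁻ x, ∫⁻ y, (edist x y) ^ (-t) ∂μ ∂μ

open scoped RealInnerProductSpace EuclideanSpace

theorem rieszEnergy_map {X Y : Type*} [MeasurableSpace X] [PseudoEMetricSpace Y]
    [MeasurableSpace Y] [OpensMeasurableSpace Y] [SecondCountableTopology Y]
    (κ : ℝ) (μ : Measure X) [SFinite μ] {f : X → Y} (hf : Measurable f) :
    rieszEnergy κ (μ.map f) = ∫⁻ x, ∫⁻ y, edist (f x) (f y) ^ (-κ) ∂μ ∂μ := by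
  have hk : Measurable fun p : Y × X ↦ edist p.1 (f p.2) ^ (-κ) :=
    (measurable_fst.edist (hf.comp measurable_snd)).pow_const _
  have hinner (a : Y) : ∫⁻ b, edist a b ^ (-κ) ∂μ.map f = ∫⁻ y, edist a (f y) ^ (-κ) ∂μ :=
    lintegral_map ((measurable_const.edist measurable_id).pow_const _) hf
  rw [rieszEnergy, lintegral_congr hinner, lintegral_map hk.lintegral_prod_right' hf]

theorem lintegral_rieszEnergy_map_le {Θ X : Type*} [MeasurableSpace Θ] [PseudoEMetricSpace X]
    [MeasurableSpace X] (κ : ℝ) (μ : Measure X) [SFinite μ] (ν : Measure Θ) [SFinite ν]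
    {π : Θ → X → ℝ} (hπ : Measurable (Function.uncurry π)) {c : ℝ≥0∞} (hc : c ≠ ∞)
    (hker : ∀ x y, ∫⁻ θ, edist (π θ x) (π θ y) ^ (-κ) ∂ν ≤ c * edist x y ^ (-κ)) :
    ∫⁻ θ, rieszEnergy κ (μ.map (π θ)) ∂ν ≤ c * rieszEnergy κ μ := by
  have hk : Measurable fun q : (Θ × X) × X ↦ edist (π q.1.1 q.1.2) (π q.1.1 q.2) ^ (-κ) :=
    ((hπ.comp measurable_fst).edist
      (hπ.comp (measurable_fst.fst.prodMk measurable_snd))).pow_const _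
  have hswap (x : X) :
      ∫⁻ θ, ∫⁻ y, edist (π θ x) (π θ y) ^ (-κ) ∂μ ∂ν =
        ∫⁻ y, ∫⁻ θ, edist (π θ x) (π θ y) ^ (-κ) ∂ν ∂μ :=
    lintegral_lintegral_swap
      (hk.comp ((measurable_fst.prodMk measurable_const).prodMk measurable_snd)).aemeasurable
  calc ∫⁻ θ, rieszEnergy κ (μ.map (π θ)) ∂ν
      = ∫⁻ θ, ∫⁻ x, ∫⁻ y, edist (π θ x) (π θ y) ^ (-κ) ∂μ ∂μ ∂ν :=
        lintegral_congr fun θ ↦ rieszEnergy_map κ μ (hπ.comp measurable_prodMk_left)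
    _ = ∫⁻ x, ∫⁻ y, ∫⁻ θ, edist (π θ x) (π θ y) ^ (-κ) ∂ν ∂μ ∂μ := by
        rw [lintegral_lintegral_swap hk.lintegral_prod_right'.aemeasurable]
        exact lintegral_congr hswap
    _ ≤ ∫⁻ x, ∫⁻ y, c * edist x y ^ (-κ) ∂μ ∂μ :=
        lintegral_mono fun x ↦ lintegral_mono (hker x)
    _ = c * rieszEnergy κ μ := by
        rw [rieszEnergy, ← lintegral_const_mul' _ _ hc]
        exact lintegral_congr fun x ↦ lintegral_const_mul' _ _ hc

lemma rpow_div_two_pow_mul_div_two_pow_rpow {R : ℝ} (hR : 0 < R) (κ α : ℝ) (n : ℕ) :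
    (R / 2 ^ (n + 1)) ^ (-κ) * (R / 2 ^ n / R) ^ α = 2 ^ κ * R ^ (-κ) * (2 ^ (κ - α)) ^ n := by
  have hx : (0:ℝ) < 2 ^ n := by positivity
  have hpow : ((2:ℝ) ^ (κ - α)) ^ n = (2 ^ n) ^ κ / (2 ^ n) ^ α := by
    rw [← Real.rpow_mul_natCast zero_le_two, mul_comm, Real.rpow_natCast_mul zero_le_two,
      Real.rpow_sub hx]
  rw [hpow, pow_succ, div_div_cancel_left' hR.ne', Real.div_rpow hR.le (by positivity),
    Real.mul_rpow hx.le zero_le_two, Real.rpow_neg hx.le, Real.rpow_neg zero_le_two,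
    Real.rpow_neg hR.le, Real.inv_rpow hx.le]
  field_simp

lemma ofReal_rpow_neg_le_tsum_indicator {R κ t : ℝ} (hR : 0 < R) (hκ : 0 ≤ κ) (ht : 0 ≤ t)
    (htR : t ≤ R) :
    ENNReal.ofReal t ^ (-κ) ≤
      ∑' n : ℕ,
        {s | s ≤ R / 2 ^ n}.indicator (fun _ ↦ ENNReal.ofReal ((R / 2 ^ (n + 1)) ^ (-κ))) t := by
  rcases ht.eq_or_lt with rfl | ht
  · have hbound : ∀ n : ℕ, ENNReal.ofReal (R ^ (-κ)) ≤
        {s | s ≤ R / 2 ^ n}.indicator (fun _ ↦ ENNReal.ofReal ((R / 2 ^ (n + 1)) ^ (-κ))) 0 := by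
      intro n
      rw [Set.indicator_of_mem (by simp only [Set.mem_ofPred_eq]; positivity)]
      refine ENNReal.ofReal_le_ofReal (Real.rpow_le_rpow_of_nonpos (by positivity) ?_ (by linarith))
      exact div_le_self hR.le (one_le_pow₀ one_le_two)
    calc ENNReal.ofReal 0 ^ (-κ) ≤ ∞ := le_top
      _ = ∑' _ : ℕ, ENNReal.ofReal (R ^ (-κ)) :=
        (ENNReal.tsum_const_eq_top_of_ne_zero (ENNReal.ofReal_pos.2 (by positivity)).ne').symm
      _ ≤ _ := ENNReal.tsum_le_tsum hbound
  · obtain ⟨n, hn, hn'⟩ := exists_nat_pow_near ((one_le_div ht).2 htR) one_lt_two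
    have hmem : t ∈ {s | s ≤ R / 2 ^ n} := (le_div_comm₀ (by positivity) ht).1 hn
    calc ENNReal.ofReal t ^ (-κ) = ENNReal.ofReal (t ^ (-κ)) := ENNReal.ofReal_rpow_of_pos ht
      _ ≤ ENNReal.ofReal ((R / 2 ^ (n + 1)) ^ (-κ)) :=
        ENNReal.ofReal_le_ofReal (Real.rpow_le_rpow_of_nonpos (by positivity)
          ((div_lt_comm₀ ht (by positivity)).1 hn').le (by linarith))
      _ = _ := (Set.indicator_of_mem hmem (fun _ ↦ _)).symm
      _ ≤ _ := ENNReal.le_tsum n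

theorem lintegral_rpow_neg_le_of_measure_sublevel_le {X : Type*} [MeasurableSpace X]
    (ν : Measure X) {g : X → ℝ} (hg : Measurable g) {R A κ α : ℝ} (hR : 0 < R) (hA : 0 ≤ A)
    (hκ : 0 ≤ κ) (hκα : κ < α) (hg_nonneg : ∀ x, 0 ≤ g x) (hg_le : ∀ x, g x ≤ R)
    (hsub : ∀ s, 0 < s → ν {x | g x ≤ s} ≤ ENNReal.ofReal (A * (s / R) ^ α)) :
    ∫⁻ x, ENNReal.ofReal (g x) ^ (-κ) ∂ν ≤
      ENNReal.ofReal (2 ^ κ / (1 - 2 ^ (κ - α)) * A) * ENNReal.ofReal R ^ (-κ) := by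
  set ρ : ℝ := 2 ^ (κ - α)
  have hρ : ρ < 1 := Real.rpow_lt_one_of_one_lt_of_neg one_lt_two (by linarith)
  have hρ0 : 0 ≤ ρ := by positivity
  set S : ℕ → Set X := fun n ↦ {x | g x ≤ R / 2 ^ n}
  have hS : ∀ n, MeasurableSet (S n) := fun n ↦ measurableSet_le hg measurable_const
  calc ∫⁻ x, ENNReal.ofReal (g x) ^ (-κ) ∂ν
      ≤ ∫⁻ x, ∑' n, (S n).indicator (fun _ ↦ ENNReal.ofReal ((R / 2 ^ (n + 1)) ^ (-κ))) x ∂ν :=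
        lintegral_mono fun x ↦ ofReal_rpow_neg_le_tsum_indicator hR hκ (hg_nonneg x) (hg_le x)
    _ = ∑' n, ENNReal.ofReal ((R / 2 ^ (n + 1)) ^ (-κ)) * ν (S n) := by
        rw [lintegral_tsum fun n ↦ (measurable_const.indicator (hS n)).aemeasurable]
        exact tsum_congr fun n ↦ lintegral_indicator_const (hS n) _
    _ ≤ ∑' n : ℕ, ENNReal.ofReal (2 ^ κ * A * R ^ (-κ) * ρ ^ n) := by
        refine ENNReal.tsum_le_tsum fun n ↦ ?_
        grw [hsub _ (by positivity), ← ENNReal.ofReal_mul (by positivity)]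
        refine ENNReal.ofReal_le_ofReal (le_of_eq ?_)
        rw [mul_left_comm, rpow_div_two_pow_mul_div_two_pow_rpow hR]
        ring
    _ = ENNReal.ofReal (2 ^ κ / (1 - ρ) * A) * ENNReal.ofReal R ^ (-κ) := by
        rw [← ENNReal.ofReal_tsum_of_nonneg (fun n ↦ by positivity)
          ((summable_geometric_of_lt_one hρ0 hρ).mul_left _), tsum_mul_left,
          tsum_geometric_of_lt_one hρ0 hρ, ENNReal.ofReal_rpow_of_pos hR,
          ← ENNReal.ofReal_mul (by have := sub_pos.2 hρ; positivity)]
        congr 1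
        ring

theorem norm_sub_sq_le_or_norm_add_sq_le {F : Type*} [NormedAddCommGroup F]
    [InnerProductSpace ℝ F] {θ u : F} (hθ : ‖θ‖ = 1) (hu : ‖u‖ = 1) :
    ‖θ - u‖ ^ 2 ≤ 2 * (1 - ⟪u, θ⟫ ^ 2) ∨ ‖θ + u‖ ^ 2 ≤ 2 * (1 - ⟪u, θ⟫ ^ 2) := by
  have hb := abs_le.1 ((abs_real_inner_le_norm u θ).trans_eq (by rw [hθ, hu, one_mul]))
  rw [norm_sub_sq_real, norm_add_sq_real, hθ, hu, real_inner_comm]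
  rcases le_total 0 ⟪u, θ⟫ with h | h
  · left; nlinarith
  · right; nlinarith

section TwoDim
open Module
variable {E : Type*} [NormedAddCommGroup E] [InnerProductSpace ℝ E] [Fact (finrank ℝ E = 2)]

theorem exists_norm_eq_one_forall_norm_sub_le_or_norm_add_le {w : E} (hw : w ≠ 0) :
    ∃ u : E, ‖u‖ = 1 ∧ ∀ θ : E, ‖θ‖ = 1 →
      ‖θ - u‖ ≤ √2 * (|⟪w, θ⟫| / ‖w‖) ∨ ‖θ + u‖ ≤ √2 * (|⟪w, θ⟫| / ‖w‖) := by
  have : FiniteDimensional ℝ E := .of_fact_finrank_eq_two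
  let o : Orientation ℝ E (Fin 2) := (finBasisOfFinrankEq ℝ E Fact.out).orientation
  have hw' : 0 < ‖w‖ := norm_pos_iff.2 hw
  set u := ‖w‖⁻¹ • o.rightAngleRotation w
  have hu : ‖u‖ = 1 := by simp [u, norm_smul, hw'.ne']
  refine ⟨u, hu, fun θ hθ ↦ ?_⟩
  have hr : 0 ≤ √2 * (|⟪w, θ⟫| / ‖w‖) := by positivity
  have hsq : 2 * (1 - ⟪u, θ⟫ ^ 2) = (√2 * (|⟪w, θ⟫| / ‖w‖)) ^ 2 := by
    have := o.inner_sq_add_areaForm_sq w θ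
    rw [hθ] at this
    rw [real_inner_smul_left, o.inner_rightAngleRotation_left]
    field_simp
    rw [Real.sq_sqrt zero_le_two, sq_abs]
    linarith
  rw [← pow_le_pow_iff_left₀ (norm_nonneg _) hr two_ne_zero,
    ← pow_le_pow_iff_left₀ (norm_nonneg _) hr two_ne_zero, ← hsq]
  exact norm_sub_sq_le_or_norm_add_sq_le hθ hu

theorem measure_abs_inner_le_le [MeasurableSpace E] {ν : Measure (Metric.sphere (0 : E) 1)}
    {C α : ℝ} (hν : ∀ θ r, 0 < r → ν (Metric.closedBall θ r) ≤ ENNReal.ofReal (C * r ^ α))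
    {w : E} (hw : w ≠ 0) {s : ℝ} (hs : 0 < s) :
    ν {θ | |⟪w, (θ : E)⟫| ≤ s} ≤ ENNReal.ofReal (2 * √2 ^ α * C * (s / ‖w‖) ^ α) := by
  obtain ⟨u, hu, hclose⟩ := exists_norm_eq_one_forall_norm_sub_le_or_norm_add_le hw
  have hu' : u ∈ Metric.sphere (0 : E) 1 := mem_sphere_zero_iff_norm.2 hu
  have hnu' : -u ∈ Metric.sphere (0 : E) 1 := mem_sphere_zero_iff_norm.2 (by rwa [norm_neg])
  set r := √2 * (s / ‖w‖) with hr_def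
  have hr : 0 < r := by have := norm_pos_iff.2 hw; positivity
  have hslab : {θ : Metric.sphere (0 : E) 1 | |⟪w, (θ : E)⟫| ≤ s} ⊆
      Metric.closedBall ⟨u, hu'⟩ r ∪ Metric.closedBall ⟨-u, hnu'⟩ r := by
    intro θ hθ
    simp only [Set.mem_union, Metric.mem_closedBall, Subtype.dist_eq, dist_eq_norm,
      sub_neg_eq_add]
    have hmono : √2 * (|⟪w, (θ : E)⟫| / ‖w‖) ≤ r := by rw [hr_def]; gcongr; exact hθ
    exact (hclose θ (norm_eq_of_mem_sphere θ)).imp hmono.trans' hmono.trans'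
  calc ν {θ | |⟪w, (θ : E)⟫| ≤ s}
      ≤ ν (Metric.closedBall ⟨u, hu'⟩ r) + ν (Metric.closedBall ⟨-u, hnu'⟩ r) :=
        (measure_mono hslab).trans (measure_union_le _ _)
    _ ≤ ENNReal.ofReal (C * r ^ α) + ENNReal.ofReal (C * r ^ α) :=
        add_le_add (hν _ r hr) (hν _ r hr)
    _ = ENNReal.ofReal (2 * √2 ^ α * C * (s / ‖w‖) ^ α) := by
        rw [← two_mul, ← ENNReal.ofReal_ofNat 2, ← ENNReal.ofReal_mul zero_le_two, hr_def,
          Real.mul_rpow (Real.sqrt_nonneg 2) (div_nonneg hs.le (norm_nonneg w))]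
        ring_nf

noncomputable def kaufmanConst (κ α : ℝ) : ℝ := 2 ^ κ / (1 - 2 ^ (κ - α)) * (2 * √2 ^ α)

theorem kaufmanConst_pos {κ α : ℝ} (hκα : κ < α) : 0 < kaufmanConst κ α := by
  have hρ : 0 < 1 - (2 : ℝ) ^ (κ - α) :=
    sub_pos.2 (Real.rpow_lt_one_of_one_lt_of_neg one_lt_two (by linarith))
  unfold kaufmanConst
  positivity

theorem lintegral_enorm_inner_rpow_neg_le [MeasurableSpace E] [BorelSpace E]
    {ν : Measure (Metric.sphere (0 : E) 1)} {C κ α : ℝ} (hC : 0 < C) (hκ : 0 < κ) (hκα : κ < α)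
    (hν : ∀ θ r, 0 < r → ν (Metric.closedBall θ r) ≤ ENNReal.ofReal (C * r ^ α)) (w : E) :
    ∫⁻ θ, ‖⟪w, (θ : E)⟫‖ₑ ^ (-κ) ∂ν ≤ ENNReal.ofReal (kaufmanConst κ α * C) * ‖w‖ₑ ^ (-κ) := by
  rcases eq_or_ne w 0 with rfl | hw
  · rw [enorm_zero, ENNReal.zero_rpow_of_neg (neg_neg_of_pos hκ),
      ENNReal.mul_top (by simpa using mul_pos (kaufmanConst_pos hκα) hC)]
    exact le_top
  have hw' : 0 < ‖w‖ := norm_pos_iff.2 hw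
  simp_rw [Real.enorm_eq_ofReal_abs, ← ofReal_norm]
  rw [show kaufmanConst κ α * C = 2 ^ κ / (1 - 2 ^ (κ - α)) * (2 * √2 ^ α * C) from mul_assoc ..]
  refine lintegral_rpow_neg_le_of_measure_sublevel_le ν
    (continuous_const.inner continuous_subtype_val).abs.measurable hw' (by positivity) hκ.le hκα
    (fun _ ↦ abs_nonneg _) (fun θ ↦ ?_) fun s hs ↦ measure_abs_inner_le_le hν hw hs
  simpa [norm_eq_of_mem_sphere θ] using abs_real_inner_le_norm w θ

end TwoDim

theorem kaufman_projection_general (κ α C : ℝ) (hκ : 0 < κ) (hκα : κ < α)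
    (hC : 1 ≤ C) :
    ∃ C' : ℝ, 0 < C' ∧
      ∀ (μ : Measure (EuclideanSpace ℝ (Fin 2)))
        (ν : Measure (Metric.sphere (0 : EuclideanSpace ℝ (Fin 2)) 1)),
        IsProbabilityMeasure μ →
        (∃ K : Set (EuclideanSpace ℝ (Fin 2)), IsCompact K ∧ μ Kᶜ = 0) →
        IsProbabilityMeasure ν →
        (∀ θ, ∀ r : ℝ, 0 < r → ν (Metric.closedBall θ r) ≤ ENNReal.ofReal (C * r ^ α)) →
        ∫⁻ θ, rieszEnergy κ
            (Measure.map (fun x => (inner ℝ x (θ : EuclideanSpace ℝ (Fin 2)) : ℝ)) μ) ∂ν ≤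
          ENNReal.ofReal (C' * C) * rieszEnergy κ μ := by
  refine ⟨kaufmanConst κ α, kaufmanConst_pos hκα, fun μ ν _ _ _ hν ↦ ?_⟩
  refine lintegral_rieszEnergy_map_le κ μ ν ?_ ENNReal.ofReal_ne_top fun x y ↦ ?_
  · exact (continuous_snd.inner (continuous_subtype_val.comp continuous_fst)).measurable
  · simp_rw [edist_eq_enorm_sub, ← inner_sub_left]
    exact lintegral_enorm_inner_rpow_neg_le (by linarith) hκ hκα hν (x - y)

/-- Kaufman's projection theorem in energy form: for `0 < κ < α ≤ 1`, a compactly supported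
probability measure `μ` on `ℝ²` and an `(α, C)`-Frostman probability measure `ν` on `S¹`,
`∫ I_κ(π_θ μ) dν(θ) ≤ C' ⋅ C ⋅ I_κ(μ)` with `C'` depending only on `κ` and `α`. -/
theorem kaufman_projection (κ α C : ℝ) (hκ : 0 < κ) (hκα : κ < α) (hα : α ≤ 1)
    (hC : 1 ≤ C) :
    ∃ C' : ℝ, 0 < C' ∧
      ∀ (μ : Measure (EuclideanSpace ℝ (Fin 2)))
        (ν : Measure (Metric.sphere (0 : EuclideanSpace ℝ (Fin 2)) 1)),
        IsProbabilityMeasure μ →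
        (∃ K : Set (EuclideanSpace ℝ (Fin 2)), IsCompact K ∧ μ Kᶜ = 0) →
        IsProbabilityMeasure ν →
        (∀ θ, ∀ r : ℝ, 0 < r → ν (Metric.closedBall θ r) ≤ ENNReal.ofReal (C * r ^ α)) →
        ∫⁻ θ, rieszEnergy κ
            (Measure.map (fun x => (inner ℝ x (θ : EuclideanSpace ℝ (Fin 2)) : ℝ)) μ) ∂ν ≤
          ENNReal.ofReal (C' * C) * rieszEnergy κ μ :=
  kaufman_projection_general κ α C hκ hκα hC
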